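/- arXiv:1405.3479 — 2 statements merged into one kernel-verified Lean document; each statement's English description precedes it below -/
import Mathlib

section
/- Let J denote the 2×2 matrix [[0,1],[1,0]]. For any 2×2 complex matrices A2 and A3, the 4×4 block matrix [[A2, J],[0, A3]] has rank at most 2 if and only if A3·J·A2 = 0. -/
open Matrix

/-!
Eliminating with the invertible block `J` (block row and column operations with unit
determinant) turns `[[A₂, J], [0, A₃]]` into `[[0, J], [-A₃ J⁻¹ A₂, 0]]`, which after swapping
the column blocks is block diagonal. Hence its rank is `2 + rank (A₃ J⁻¹ A₂)`, and `J⁻¹ = J`.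
-/

def Submodule.prodEquivProd {R M M' : Type*} [Semiring R] [AddCommMonoid M] [AddCommMonoid M']
    [Module R M] [Module R M'] (S : Submodule R M) (T : Submodule R M') :
    S.prod T ≃ₗ[R] S × T where
  toFun x := (⟨x.1.1, x.2.1⟩, ⟨x.1.2, x.2.2⟩)
  invFun y := ⟨(y.1, y.2), y.1.2, y.2.2⟩
  map_add' _ _ := rfl
  map_smul' _ _ := rfl
  left_inv _ := rfl
  right_inv _ := rfl

namespace Matrix

variable {K : Type*} [Field K] {m n p q : Type*} [Fintype n] [Fintype q]

theorem mulVecLin_fromBlocks_zero (A : Matrix m n K) (D : Matrix p q K) :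
    (fromBlocks A 0 0 D).mulVecLin =
      (LinearEquiv.sumArrowLequivProdArrow m p K K).symm.toLinearMap ∘ₗ
        A.mulVecLin.prodMap D.mulVecLin ∘ₗ
          (LinearEquiv.sumArrowLequivProdArrow n q K K).toLinearMap := by
  ext v (i | i) <;> simp [fromBlocks_mulVec] <;> rfl

theorem rank_fromBlocks_zero_zero (A : Matrix m n K) (D : Matrix p q K) :
    (fromBlocks A 0 0 D).rank = A.rank + D.rank := by
  rw [rank, mulVecLin_fromBlocks_zero, LinearMap.range_comp,
    LinearMap.range_comp_of_range_eq_top _ (LinearEquiv.range _), LinearEquiv.finrank_map_eq,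
    LinearMap.range_prodMap, (Submodule.prodEquivProd _ _).finrank_eq, Module.finrank_prod]
  rfl

theorem rank_neg {R : Type*} [CommRing R] (A : Matrix m n R) : (-A).rank = A.rank := by
  have : (-A).mulVecLin = -A.mulVecLin := by ext; simp
  rw [rank, rank, this, LinearMap.range_neg]

theorem rank_eq_zero_iff {A : Matrix m n K} : A.rank = 0 ↔ A = 0 := by
  classical
  rw [rank, Submodule.finrank_eq_zero, LinearMap.range_eq_bot]
  exact (Matrix.toLin' (R := K)).map_eq_zero_iff

theorem rank_fromBlocks_zero₂₁_of_invertible [DecidableEq n] [Fintype p] [DecidableEq p]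
    [DecidableEq q] (A : Matrix n q K) (J : Matrix n n K) [Invertible J] (B : Matrix p n K) :
    (fromBlocks A J 0 B).rank = Fintype.card n + (B * ⅟J * A).rank := by
  set P : Matrix (n ⊕ p) (n ⊕ p) K := fromBlocks 1 0 (-(B * ⅟J)) 1
  set Q : Matrix (q ⊕ n) (q ⊕ n) K := fromBlocks 1 0 (-(⅟J * A)) 1
  have hP : IsUnit P.det := by simp [P]
  have hQ : IsUnit Q.det := by simp [Q]
  have hPMQ : P * fromBlocks A J 0 B * Q = fromBlocks 0 J (-(B * ⅟J * A)) 0 := by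
    simp [P, Q, fromBlocks_multiply, Matrix.mul_assoc]
  calc (fromBlocks A J 0 B).rank
      = (P * fromBlocks A J 0 B * Q).rank := by
        rw [Matrix.mul_assoc, rank_mul_eq_right_of_isUnit_det _ _ hP,
          rank_mul_eq_left_of_isUnit_det _ _ hQ]
    _ = (fromBlocks J 0 0 (-(B * ⅟J * A))).rank := by
        rw [hPMQ, ← rank_submatrix _ (Equiv.refl _) (Equiv.sumComm n q)]
        simp [fromBlocks_submatrix_sum_swap_right]
    _ = Fintype.card n + (B * ⅟J * A).rank := by
        rw [rank_fromBlocks_zero_zero, rank_neg, rank_of_isUnit _ (isUnit_of_invertible J)]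

end Matrix

theorem stmt_0 (A2 A3 : Matrix (Fin 2) (Fin 2) ℂ) :
    (Matrix.fromBlocks A2 (!![0, 1; 1, 0]) 0 A3).rank ≤ 2 ↔
      A3 * !![0, 1; 1, 0] * A2 = 0 := by
  have hJJ : (!![0, 1; 1, 0] : Matrix (Fin 2) (Fin 2) ℂ) * !![0, 1; 1, 0] = 1 := by
    simp [← Matrix.one_fin_two]
  let _ : Invertible (!![0, 1; 1, 0] : Matrix (Fin 2) (Fin 2) ℂ) := ⟨_, hJJ, hJJ⟩
  rw [rank_fromBlocks_zero₂₁_of_invertible, Fintype.card_fin, add_le_iff_nonpos_right,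
    nonpos_iff_eq_zero, Matrix.rank_eq_zero_iff]
  -- `⅟J` is `J` itself by the choice of the instance
  rfl
end

section
/- Let J = [[0,1],[1,0]] and let A1, A2, A3, A4 be 2×2 complex matrices. Then the two conditions rank[[A2, J],[0, A3]] ≤ 2 and rank[[A1,0,J],[A2,J,0],[0,A3,A4]] ≤ 4 hold together if and only if A3·J·A2 = 0 and A4·J·A1 = 0. -/
open Matrix

/-- The 6×6 block matrix `[[A1, 0, J], [A2, J, 0], [0, A3, A4]]`, written with rows and
columns grouped as `(2+2)+2`. -/
def bigBlock (A1 A2 A3 A4 J : Matrix (Fin 2) (Fin 2) ℂ) :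
    Matrix ((Fin 2 ⊕ Fin 2) ⊕ Fin 2) ((Fin 2 ⊕ Fin 2) ⊕ Fin 2) ℂ :=
  Matrix.fromBlocks (Matrix.fromBlocks A1 0 A2 J) (Matrix.fromRows J 0)
    (Matrix.fromCols 0 A3) A4

open Matrix in
@[simp] lemma fromColumns_add' {R n m₁ m₂ : Type*} [AddCommMonoid R]
    (A₁ B₁ : Matrix n m₁ R) (A₂ B₂ : Matrix n m₂ R) :
    fromCols A₁ A₂ + fromCols B₁ B₂ = fromCols (A₁ + B₁) (A₂ + B₂) := by
  ext i (j | j) <;> simp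

open Matrix in
@[simp] lemma fromColumns_fromRows_zero' {R m₁ m₂ n₁ n₂ : Type*} [Zero R]
    (Z : Matrix m₁ n₁ R) (W : Matrix m₂ n₁ R) :
    fromCols (fromRows Z W) (0 : Matrix (m₁ ⊕ m₂) n₂ R) = fromBlocks Z 0 W 0 := by
  ext (i | i) (j | j) <;> simp

open Matrix in
@[simp] lemma fromRows_fromColumns_zero' {R m₁ m₂ n₁ n₂ : Type*} [Zero R]
    (Z : Matrix m₁ n₁ R) (W : Matrix m₁ n₂ R) :
    fromRows (fromCols Z W) (0 : Matrix m₂ (n₁ ⊕ n₂) R) = fromBlocks Z W 0 0 := by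
  ext (i | i) (j | j) <;> simp



section Aux

lemma finrank_prod_submodule {M M' : Type*} [AddCommGroup M] [Module ℂ M] [AddCommGroup M']
    [Module ℂ M'] [FiniteDimensional ℂ M] [FiniteDimensional ℂ M']
    (p : Submodule ℂ M) (q : Submodule ℂ M') :
    Module.finrank ℂ (p.prod q) = Module.finrank ℂ p + Module.finrank ℂ q := by
  rw [LinearMap.prod_eq_sup_map]
  have hdis : (p.map (LinearMap.inl ℂ M M')) ⊓ (q.map (LinearMap.inr ℂ M M')) = ⊥ := by
    rw [eq_bot_iff]
    rintro ⟨x, y⟩ ⟨h1, h2⟩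
    obtain ⟨a, -, ha⟩ := h1
    obtain ⟨b, -, hb⟩ := h2
    have hy : y = 0 := by
      have := congrArg Prod.snd ha; simpa using this.symm
    have hx : x = 0 := by
      have := congrArg Prod.fst hb; simpa using this.symm
    simp [hx, hy]
  have key := Submodule.finrank_sup_add_finrank_inf_eq
    (p.map (LinearMap.inl ℂ M M')) (q.map (LinearMap.inr ℂ M M'))
  rw [hdis, finrank_bot, add_zero] at key
  rw [key]
  congr 1
  · exact ((p.equivMapOfInjective _ LinearMap.inl_injective).symm.finrank_eq)
  · exact ((q.equivMapOfInjective _ LinearMap.inr_injective).symm.finrank_eq)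

variable {m n m' n' : Type*} [Fintype m] [Fintype n] [Fintype m'] [Fintype n']

lemma rank_fromBlocks_diag (A : Matrix m n ℂ) (D : Matrix m' n' ℂ) :
    (Matrix.fromBlocks A 0 0 D).rank = A.rank + D.rank := by
  classical
  set e := LinearEquiv.sumArrowLequivProdArrow m m' ℂ ℂ with he
  have hrange : LinearMap.range (Matrix.fromBlocks A 0 0 D).mulVecLin =
      Submodule.map (e.symm : ((m → ℂ) × (m' → ℂ)) →ₗ[ℂ] (m ⊕ m' → ℂ))
        ((LinearMap.range A.mulVecLin).prod (LinearMap.range D.mulVecLin)) := by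
    ext y
    constructor
    · rintro ⟨x, rfl⟩
      refine ⟨(A *ᵥ (x ∘ Sum.inl), D *ᵥ (x ∘ Sum.inr)), ⟨⟨_, rfl⟩, ⟨_, rfl⟩⟩, ?_⟩
      have hx : x = Sum.elim (x ∘ Sum.inl) (x ∘ Sum.inr) := by
        funext i; cases i <;> rfl
      rw [Matrix.mulVecLin_apply]
      conv_rhs => rw [hx]
      rw [Matrix.fromBlocks_mulVec]
      funext i
      cases i <;> simp [e]
    · rintro ⟨⟨u, v⟩, ⟨⟨x1, h1⟩, ⟨x2, h2⟩⟩, rfl⟩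
      refine ⟨Sum.elim x1 x2, ?_⟩
      simp only [Matrix.mulVecLin_apply] at h1 h2
      rw [Matrix.mulVecLin_apply, Matrix.fromBlocks_mulVec]
      funext i
      cases i <;> simp [e, ← h1, ← h2]
  rw [Matrix.rank, hrange, LinearEquiv.finrank_map_eq, finrank_prod_submodule,
    Matrix.rank, Matrix.rank]

lemma rank_eq_zero_iff'' [DecidableEq n] (A : Matrix m n ℂ) : A.rank = 0 ↔ A = 0 := by
  constructor
  · intro h
    rw [Matrix.rank] at h
    rw [Submodule.finrank_eq_zero] at h
    rw [LinearMap.range_eq_bot] at h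
    ext i j
    have := congrFun (congrFun (congrArg DFunLike.coe h) (Pi.single j 1)) i
    simpa [Matrix.mulVecLin_apply, Matrix.mulVec_single] using this
  · rintro rfl
    simp [Matrix.rank]

end Aux

theorem stmt_19 (A1 A2 A3 A4 : Matrix (Fin 2) (Fin 2) ℂ) :
    let J : Matrix (Fin 2) (Fin 2) ℂ := !![0, 1; 1, 0]
    ((Matrix.fromBlocks A2 J 0 A3).rank ≤ 2 ∧ (bigBlock A1 A2 A3 A4 J).rank ≤ 4) ↔
      (A3 * J * A2 = 0 ∧ A4 * J * A1 = 0) := by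
  intro J
  have hJJ : J * J = 1 := by
    ext i j
    fin_cases i <;> fin_cases j <;> simp [J, Matrix.mul_apply, Fin.sum_univ_two]
  have hJdet : IsUnit J.det := by
    have : J.det = -1 := by simp [J, Matrix.det_fin_two_of]
    rw [this]; exact isUnit_one.neg
  have hJunit : IsUnit J := (Matrix.isUnit_iff_isUnit_det J).mpr hJdet
  have hJrank : J.rank = 2 := by
    rw [Matrix.rank_of_isUnit J hJunit]; simp
  set X : Matrix (Fin 2) (Fin 2) ℂ := -(A3 * J * A2) with hX
  set Y : Matrix (Fin 2) (Fin 2) ℂ := -(A4 * J * A1 + A3 * J * A2) with hY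
  have hJJl : ∀ B : Matrix (Fin 2) (Fin 2) ℂ, J * (J * B) = B := fun B => by
    rw [← Matrix.mul_assoc, hJJ, Matrix.one_mul]
  have hJJr : ∀ B : Matrix (Fin 2) (Fin 2) ℂ, B * J * J = B := fun B => by
    rw [Matrix.mul_assoc, hJJ, Matrix.mul_one]
  -- 4×4 factorization
  have h4 : Matrix.fromBlocks A2 J 0 A3 =
      Matrix.fromBlocks 1 0 (A3 * J) 1 *
        (Matrix.fromBlocks 0 J X 0 * Matrix.fromBlocks 1 0 (J * A2) 1) := by
    simp [Matrix.fromBlocks_multiply, hX, hJJl, hJJr, ← Matrix.mul_assoc, hJJ]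
  have hLdet : IsUnit (Matrix.fromBlocks (1 : Matrix (Fin 2) (Fin 2) ℂ) 0 (A3 * J) 1).det := by
    rw [Matrix.det_fromBlocks_zero₁₂]; simp
  have hRdet : IsUnit (Matrix.fromBlocks (1 : Matrix (Fin 2) (Fin 2) ℂ) 0 (J * A2) 1).det := by
    rw [Matrix.det_fromBlocks_zero₁₂]; simp
  have hP2 : (Matrix.fromBlocks (0 : Matrix (Fin 2) (Fin 2) ℂ) 1 1 0) *
      (Matrix.fromBlocks 0 1 1 0) = (1 : Matrix (Fin 2 ⊕ Fin 2) (Fin 2 ⊕ Fin 2) ℂ) := by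
    simp [Matrix.fromBlocks_multiply, Matrix.fromBlocks_one]
  have hP2det : IsUnit (Matrix.fromBlocks (0 : Matrix (Fin 2) (Fin 2) ℂ) 1 1 0).det :=
    IsUnit.of_mul_eq_one (Matrix.fromBlocks (0 : Matrix (Fin 2) (Fin 2) ℂ)
      (1 : Matrix (Fin 2) (Fin 2) ℂ) (1 : Matrix (Fin 2) (Fin 2) ℂ) 0).det
      (by rw [← Matrix.det_mul, hP2, Matrix.det_one])
  have hswap : Matrix.fromBlocks J 0 0 X * Matrix.fromBlocks 0 1 1 0 =
      Matrix.fromBlocks 0 J X 0 := by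
    simp [Matrix.fromBlocks_multiply]
  have hr4 : (Matrix.fromBlocks A2 J 0 A3).rank = 2 + X.rank := by
    rw [h4, Matrix.rank_mul_eq_right_of_isUnit_det _ _ hLdet,
      Matrix.rank_mul_eq_left_of_isUnit_det _ _ hRdet, ← hswap,
      Matrix.rank_mul_eq_left_of_isUnit_det _ _ hP2det,
      rank_fromBlocks_diag, hJrank]
  -- 6×6 factorization
  have h6 : bigBlock A1 A2 A3 A4 J =
      Matrix.fromBlocks (1 : Matrix (Fin 2 ⊕ Fin 2) (Fin 2 ⊕ Fin 2) ℂ) 0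
          (Matrix.fromCols (A4 * J) (A3 * J)) 1 *
        (Matrix.fromBlocks (Matrix.fromBlocks 0 0 0 J) (Matrix.fromRows J 0)
            (Matrix.fromCols Y 0) 0 *
          Matrix.fromBlocks (Matrix.fromBlocks 1 0 (J * A2) 1) 0
            (Matrix.fromCols (J * A1) 0) 1) := by
    simp [bigBlock, Matrix.fromBlocks_multiply, Matrix.fromCols_mul_fromBlocks,
      Matrix.fromBlocks_mul_fromRows, Matrix.fromRows_mul_fromCols,
      Matrix.fromCols_mul_fromRows, hY, hJJl, hJJr, Matrix.fromBlocks_add,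
      Matrix.fromCols_fromRows_eq_fromBlocks, Matrix.fromRows_fromCols_eq_fromBlocks,
      ← Matrix.mul_assoc, hJJ, add_comm, add_left_comm, add_assoc]
  have hL6det : IsUnit (Matrix.fromBlocks (1 : Matrix (Fin 2 ⊕ Fin 2) (Fin 2 ⊕ Fin 2) ℂ) 0
      (Matrix.fromCols (A4 * J) (A3 * J)) 1).det := by
    rw [Matrix.det_fromBlocks_zero₁₂]; simp
  have hR6det : IsUnit (Matrix.fromBlocks
      (Matrix.fromBlocks (1 : Matrix (Fin 2) (Fin 2) ℂ) 0 (J * A2) 1) 0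
      (Matrix.fromCols (J * A1) 0) 1).det := by
    rw [Matrix.det_fromBlocks_zero₁₂, Matrix.det_fromBlocks_zero₁₂]; simp
  have hP6 : (Matrix.fromBlocks (Matrix.fromBlocks (0 : Matrix (Fin 2) (Fin 2) ℂ) 0 0 1)
        (Matrix.fromRows 1 0) (Matrix.fromCols 1 0) 0) *
      (Matrix.fromBlocks (Matrix.fromBlocks 0 0 0 1)
        (Matrix.fromRows 1 0) (Matrix.fromCols 1 0) 0) =
      (1 : Matrix ((Fin 2 ⊕ Fin 2) ⊕ Fin 2) ((Fin 2 ⊕ Fin 2) ⊕ Fin 2) ℂ) := by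
    simp [Matrix.fromBlocks_multiply, Matrix.fromCols_mul_fromBlocks,
      Matrix.fromBlocks_mul_fromRows, Matrix.fromRows_mul_fromCols,
      Matrix.fromCols_mul_fromRows, Matrix.fromBlocks_add, ← Matrix.fromBlocks_one,
      Matrix.fromRows_zero, Matrix.fromCols_zero]
  have hP6det : IsUnit (Matrix.fromBlocks (Matrix.fromBlocks (0 : Matrix (Fin 2) (Fin 2) ℂ) 0 0 1)
      (Matrix.fromRows 1 0) (Matrix.fromCols 1 0) 0).det :=
    IsUnit.of_mul_eq_one (Matrix.fromBlocks
      (Matrix.fromBlocks (0 : Matrix (Fin 2) (Fin 2) ℂ) 0 0 (1 : Matrix (Fin 2) (Fin 2) ℂ))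
      (Matrix.fromRows (1 : Matrix (Fin 2) (Fin 2) ℂ) 0)
      (Matrix.fromCols (1 : Matrix (Fin 2) (Fin 2) ℂ) 0)
      (0 : Matrix (Fin 2) (Fin 2) ℂ)).det
      (by rw [← Matrix.det_mul, hP6, Matrix.det_one])
  have hMP : Matrix.fromBlocks (Matrix.fromBlocks 0 0 0 J) (Matrix.fromRows J 0)
        (Matrix.fromCols Y 0) 0 *
      Matrix.fromBlocks (Matrix.fromBlocks (0 : Matrix (Fin 2) (Fin 2) ℂ) 0 0 1)
        (Matrix.fromRows 1 0) (Matrix.fromCols 1 0) 0 =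
      Matrix.fromBlocks (Matrix.fromBlocks J 0 0 J) 0 0 Y := by
    simp [Matrix.fromBlocks_multiply, Matrix.fromCols_mul_fromBlocks,
      Matrix.fromBlocks_mul_fromRows, Matrix.fromRows_mul_fromCols,
      Matrix.fromCols_mul_fromRows, Matrix.fromRows_zero, Matrix.fromCols_zero,
      Matrix.fromBlocks_add]
  have hr6 : (bigBlock A1 A2 A3 A4 J).rank = 4 + Y.rank := by
    rw [h6, Matrix.rank_mul_eq_right_of_isUnit_det _ _ hL6det,
      Matrix.rank_mul_eq_left_of_isUnit_det _ _ hR6det,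
      ← Matrix.rank_mul_eq_left_of_isUnit_det _ _ hP6det, hMP,
      rank_fromBlocks_diag, rank_fromBlocks_diag, hJrank]
  rw [hr4, hr6]
  constructor
  · rintro ⟨h1, h2⟩
    have hX0 : X = 0 := (rank_eq_zero_iff'' X).mp (by omega)
    have h3 : A3 * J * A2 = 0 := by rwa [hX, neg_eq_zero] at hX0
    have hY0 : Y = 0 := (rank_eq_zero_iff'' Y).mp (by omega)
    have h4' : A4 * J * A1 = 0 := by
      rw [hY, h3, add_zero, neg_eq_zero] at hY0; exact hY0
    exact ⟨h3, h4'⟩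
  · rintro ⟨h3, h4'⟩
    have hX0 : X = 0 := by rw [hX, h3, neg_zero]
    have hY0 : Y = 0 := by rw [hY, h3, h4', add_zero, neg_zero]
    rw [hX0, hY0, Matrix.rank_zero]
    exact ⟨by norm_num, by norm_num⟩
end
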